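/- arXiv:2106.12813 — 4 statements merged into one kernel-verified Lean document; each statement's English description precedes it below -/
import Mathlib

section
/- Let ⟦E⟧ be a well-formed TFG for the equivalence (N₁, m₁) ▷_E (N₂, m₂). If c is a well-defined configuration of ⟦E⟧, then the combined system E, ⟨c⟩ is consistent (i.e. c is a partial solution of E). -/
/-! Common definitions: Petri nets, reduction-equation systems, E-equivalence,
token flow graphs (TFG), configurations and the concurrency relation. -/

/-- A Petri net over a universe `V` of place names. -/
structure PetriNet (V : Type) where
  /-- the type of transitions -/
  T : Type
  places : Set V
  pre : T → places → ℕ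
  post : T → places → ℕ

namespace PetriNet

variable {V : Type}

/-- A marking assigns a number of tokens to each place. -/
abbrev Marking (N : PetriNet V) := N.places → ℕ

/-- Firing transition `t` from `m` yields `m'`. -/
def Fire (N : PetriNet V) (m : N.Marking) (t : N.T) (m' : N.Marking) : Prop :=
  (∀ p, N.pre t p ≤ m p) ∧ (∀ p, m' p = m p - N.pre t p + N.post t p)

/-- One-step firing relation. -/
def Step (N : PetriNet V) (m m' : N.Marking) : Prop := ∃ t, N.Fire m t m'

/-- The set `R(N, m₀)` of reachable markings. -/
def Reach (N : PetriNet V) (m₀ : N.Marking) : Set N.Marking :=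
  { m | Relation.ReflTransGen N.Step m₀ m }

/-- A marked net is safe when every reachable marking is 1-bounded. -/
def Safe (N : PetriNet V) (m₀ : N.Marking) : Prop :=
  ∀ m ∈ N.Reach m₀, ∀ p, m p ≤ 1

end PetriNet

/-- A partial valuation of the names (markings and configurations seen as
partial functions). -/
abbrev PVal (V : Type) := V → Option ℕ

open Classical in
/-- The partial valuation `⟨m⟩` associated to a marking `m` of a net `N`:
defined exactly on the places of `N`. -/
noncomputable def PetriNet.mval {V : Type} (N : PetriNet V) (m : N.Marking) : PVal V :=
  fun v => if h : v ∈ N.places then some (m ⟨v, h⟩) else none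

/-- A system of reduction equations: the pair `(v, X)` stands for the equation
`v = Σ_{w ∈ X} w`. -/
abbrev EqSystem (V : Type) := Set (V × Finset V)

/-- A total valuation agrees with a partial one (i.e. satisfies `⟨c⟩`). -/
def Agrees {V : Type} (θ : V → ℕ) (c : PVal V) : Prop :=
  ∀ v n, c v = some n → θ v = n

/-- `θ` is a solution of `E`, where constant names (given by `kval`) take their
fixed value. -/
def Solves {V : Type} (kval : V → Option ℕ) (E : EqSystem V) (θ : V → ℕ) : Prop :=
  (∀ v n, kval v = some n → θ v = n) ∧
  (∀ e ∈ E, θ e.1 = ∑ w ∈ e.2, θ w)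

/-- The combined system `E, ⟨c₁⟩, …, ⟨c_k⟩` is consistent. -/
def Consistent {V : Type} (kval : V → Option ℕ) (E : EqSystem V)
    (cs : List (PVal V)) : Prop :=
  ∃ θ : V → ℕ, Solves kval E θ ∧ ∀ c ∈ cs, Agrees θ c

/-- The set `fv(E)` of (non-constant) variables occurring in `E`. -/
def fvars {V : Type} (kval : V → Option ℕ) (E : EqSystem V) : Set V :=
  { v | kval v = none ∧ ∃ e ∈ E, v = e.1 ∨ v ∈ e.2 }

/-- E-equivalence `(N₁, m₁) ▷_E (N₂, m₂)`. -/
structure EEquiv {V : Type} (kval : V → Option ℕ) (E : EqSystem V)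
    (N₁ : PetriNet V) (m₁ : N₁.Marking) (N₂ : PetriNet V) (m₂ : N₂.Marking) : Prop where
  A1 : ∀ m ∈ N₁.Reach m₁, Consistent kval E [N₁.mval m]
  A1' : ∀ m ∈ N₂.Reach m₂, Consistent kval E [N₂.mval m]
  A2 : Consistent kval E [N₁.mval m₁, N₂.mval m₂]
  A3 : ∀ (m₁' : N₁.Marking) (m₂' : N₂.Marking),
      Consistent kval E [N₁.mval m₁', N₂.mval m₂'] →
      (m₁' ∈ N₁.Reach m₁ ↔ m₂' ∈ N₂.Reach m₂)

/-- A token flow graph `G = (V, R, A)`, with a finite set of constant nodes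
(recorded, together with their fixed values, by `kval`). -/
structure TFG (V : Type) where
  nodes : Set V
  /-- `kval v = some n` iff `v` is a constant node of fixed value `n` -/
  kval : V → Option ℕ
  Rarc : V → V → Prop
  Aarc : V → V → Prop
  arcs_disjoint : ∀ v w, ¬ (Rarc v w ∧ Aarc v w)
  Rarc_mem : ∀ v w, Rarc v w → v ∈ nodes ∧ w ∈ nodes
  Aarc_mem : ∀ v w, Aarc v w → v ∈ nodes ∧ w ∈ nodes
  kval_mem : ∀ v n, kval v = some n → v ∈ nodes
  kval_finite : { v | (kval v).isSome }.Finite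

namespace TFG

variable {V : Type}

/-- `v → w` : `v` and `w` are related by some arc. -/
def Arc (G : TFG V) (v w : V) : Prop := G.Rarc v w ∨ G.Aarc v w

/-- `v →* w` : reflexive-transitive closure of the arc relation. -/
def Path (G : TFG V) (v w : V) : Prop := Relation.ReflTransGen G.Arc v w

/-- A root is a node that is never the target of an arc. -/
def Root (G : TFG V) (v : V) : Prop := v ∈ G.nodes ∧ ∀ w, ¬ G.Arc w v

/-- A leaf is a node with no outgoing arc. -/
def Leaf (G : TFG V) (v : V) : Prop := v ∈ G.nodes ∧ ∀ w, ¬ G.Arc v w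

/-- `succs(v) = { w : v →* w }`. -/
def succs (G : TFG V) (v : V) : Set V := { w | G.Path v w }

/-- `v ∘→ X` : `X` is the (nonempty) set of all `A`-successors of `v`. -/
def AggSet (G : TFG V) (v : V) (X : Finset V) : Prop :=
  X.Nonempty ∧ ∀ w, w ∈ X ↔ G.Aarc v w

/-- `X →• v` : `X` is the (nonempty) set of all `R`-predecessors of `v`. -/
def RedSet (G : TFG V) (v : V) (X : Finset V) : Prop :=
  X.Nonempty ∧ ∀ w, w ∈ X ↔ G.Rarc w v

/-- A configuration: a partial valuation assigning to every constant node its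
fixed value. -/
def IsConfig (G : TFG V) (c : PVal V) : Prop :=
  ∀ v n, G.kval v = some n → c v = some n

/-- A configuration is total when it is defined on every node. -/
def Total (G : TFG V) (c : PVal V) : Prop := ∀ v ∈ G.nodes, (c v).isSome

/-- A well-defined configuration: a configuration satisfying (CBot) and (CEq). -/
structure WDConfig (G : TFG V) (c : PVal V) : Prop where
  isConfig : G.IsConfig c
  cbot : ∀ v w, G.Arc v w → ((c v).isSome ↔ (c w).isSome)
  ceq : ∀ v X, (G.AggSet v X ∨ G.RedSet v X) → ∀ n, c v = some n →
      ∃ g : V → ℕ, (∀ w ∈ X, c w = some (g w)) ∧ n = ∑ w ∈ X, g w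

end TFG

/-- `G` is a well-formed TFG for `(N₁, m₁) ▷_E (N₂, m₂)` : conditions (T1)–(T4).
(The disjointness part of (T3) is already part of the `TFG` structure.) -/
structure WellFormed {V : Type} (G : TFG V) (E : EqSystem V)
    (N₁ N₂ : PetriNet V) : Prop where
  T1 : { v ∈ G.nodes | G.kval v = none } = N₁.places ∪ N₂.places ∪ fvars G.kval E
  T2 : ∀ v, (G.kval v).isSome → G.Root v
  T3 : ∀ p p' q, G.Aarc p q → G.Arc p' q → p = p'
  T4 : ∀ v X, (G.AggSet v X ∨ G.RedSet v X) ↔ (v, X) ∈ E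

/-- The restriction `c|N` of `c` to the places of `N` is a reachable marking
of `(N, m₀)`. -/
def RestrReach {V : Type} (N : PetriNet V) (m₀ : N.Marking) (c : PVal V) : Prop :=
  ∃ m ∈ N.Reach m₀, ∀ p : N.places, c p = some (m p)

/-- The concurrency relation `𝒞` of the TFG (w.r.t. the residual net `(N₂, m₂)`):
`v 𝒞 w` iff some total, well-defined configuration `c` with `c|N₂ ∈ R(N₂, m₂)`
marks both `v` and `w`. -/
def TFG.Conc {V : Type} (G : TFG V) (N₂ : PetriNet V) (m₂ : N₂.Marking)
    (v w : V) : Prop :=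
  ∃ c : PVal V, G.WDConfig c ∧ G.Total c ∧ RestrReach N₂ m₂ c ∧
    (∃ n, c v = some n ∧ 0 < n) ∧ (∃ n, c w = some n ∧ 0 < n)

/-- well-defined configurations are partial solutions of `E`. -/
theorem wdconfig_consistent {V : Type} (G : TFG V) (E : EqSystem V)
    (N₁ : PetriNet V) (m₁ : N₁.Marking) (N₂ : PetriNet V) (m₂ : N₂.Marking)
    (hwf : WellFormed G E N₁ N₂)
    (heq : EEquiv G.kval E N₁ m₁ N₂ m₂)
    (c : PVal V) (hc : G.WDConfig c) :
    Consistent G.kval E [c] := by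
  obtain ⟨θ₀, hθ₀, -⟩ := heq.A2
  refine ⟨fun v => (c v).getD (θ₀ v), ⟨?_, ?_⟩, ?_⟩
  · intro v n hk
    simp [hc.isConfig v n hk]
  · rintro ⟨v, X⟩ he
    have hvx := (hwf.T4 v X).mpr he
    -- every w ∈ X is connected to v by an arc
    have harc : ∀ w ∈ X, G.Arc v w ∨ G.Arc w v := by
      intro w hw
      rcases hvx with ⟨-, hX⟩ | ⟨-, hX⟩
      · exact Or.inl (Or.inr ((hX w).mp hw))
      · exact Or.inr (Or.inl ((hX w).mp hw))
    cases hcv : c v with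
    | none =>
      have hall : ∀ w ∈ X, c w = none := by
        intro w hw
        rcases harc w hw with h | h
        · have := hc.cbot v w h
          cases hcw : c w with
          | none => rfl
          | some m => simp [hcv, hcw] at this
        · have := hc.cbot w v h
          cases hcw : c w with
          | none => rfl
          | some m => simp [hcv, hcw] at this
      have := hθ₀.2 (v, X) he
      simp only [hcv, Option.getD_none]
      rw [this]
      exact Finset.sum_congr rfl fun w hw => by simp [hall w hw]
    | some n =>
      obtain ⟨g, hg, hn⟩ := hc.ceq v X hvx n hcv
      simp only [hcv, Option.getD_some]
      rw [hn]
      exact Finset.sum_congr rfl fun w hw => by simp [hg w hw]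
  · intro c' hc' v n hv
    simp at hc'
    subst hc'
    simp [hv]
end

section
/- (Configuration reachability, transfer direction) Let ⟦E⟧ be a well-formed TFG for the equivalence (N₁, m₁) ▷_E (N₂, m₂). For every total, well-defined configuration c of ⟦E⟧, the marking c|N₁ (the restriction of c to the places of N₁) is reachable in (N₁, m₁) if and only if the marking c|N₂ is reachable in (N₂, m₂). -/
/-- configuration reachability, transfer direction. -/
theorem configuration_reachability_transfer {V : Type} (G : TFG V)
    (E : EqSystem V)
    (N₁ : PetriNet V) (m₁ : N₁.Marking) (N₂ : PetriNet V) (m₂ : N₂.Marking)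
    (hwf : WellFormed G E N₁ N₂)
    (heq : EEquiv G.kval E N₁ m₁ N₂ m₂)
    (c : PVal V) (hc : G.WDConfig c) (htot : G.Total c) :
    RestrReach N₁ m₁ c ↔ RestrReach N₂ m₂ c := by
  classical
  set θ : V → ℕ := fun v => (c v).getD 0 with hθ
  have hsub1 : N₁.places ⊆ G.nodes := by
    intro p hp
    have : p ∈ {v ∈ G.nodes | G.kval v = none} := by
      rw [hwf.T1]; exact Or.inl (Or.inl hp)
    exact this.1
  have hsub2 : N₂.places ⊆ G.nodes := by
    intro p hp
    have : p ∈ {v ∈ G.nodes | G.kval v = none} := by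
      rw [hwf.T1]; exact Or.inl (Or.inr hp)
    exact this.1
  have hsolve : Solves G.kval E θ := by
    constructor
    · intro v n h
      have := hc.isConfig v n h
      simp [hθ, this]
    · rintro ⟨v, X⟩ he
      have hvx := (hwf.T4 v X).2 he
      have hvnode : v ∈ G.nodes := by
        rcases hvx with ⟨⟨w, hw⟩, hX⟩ | ⟨⟨w, hw⟩, hX⟩
        · exact (G.Aarc_mem v w ((hX w).1 hw)).1
        · exact (G.Rarc_mem w v ((hX w).1 hw)).2
      obtain ⟨n, hn⟩ := Option.isSome_iff_exists.1 (htot v hvnode)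
      obtain ⟨g, hg, hsum⟩ := hc.ceq v X hvx n hn
      have h1 : θ v = n := by simp [hθ, hn]
      simp only [h1, hsum]
      exact Finset.sum_congr rfl fun w hw => by simp [hθ, hg w hw]
  -- the candidate markings read off from c
  have hcθ1 : ∀ p : N₁.places, c p = some (θ p) := by
    intro p
    obtain ⟨k, hk⟩ := Option.isSome_iff_exists.1 (htot p (hsub1 p.2))
    simp [hθ, hk]
  have hcθ2 : ∀ p : N₂.places, c p = some (θ p) := by
    intro p
    obtain ⟨k, hk⟩ := Option.isSome_iff_exists.1 (htot p (hsub2 p.2))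
    simp [hθ, hk]
  have hagree1 : ∀ (m' : N₁.Marking), (∀ p : N₁.places, c p = some (m' p)) →
      Agrees θ (N₁.mval m') := by
    intro m' hm' v n hv
    unfold PetriNet.mval at hv
    split at hv
    · next h =>
      have := hm' ⟨v, h⟩
      simp only [Option.some_inj] at hv
      simp [hθ, this, hv]
    · exact absurd hv (by simp)
  have hagree2 : ∀ (m' : N₂.Marking), (∀ p : N₂.places, c p = some (m' p)) →
      Agrees θ (N₂.mval m') := by
    intro m' hm' v n hv
    unfold PetriNet.mval at hv
    split at hv
    · next h =>
      have := hm' ⟨v, h⟩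
      simp only [Option.some_inj] at hv
      simp [hθ, this, hv]
    · exact absurd hv (by simp)
  constructor
  · rintro ⟨m₁', hm₁', hcm₁⟩
    set m₂' : N₂.Marking := fun p => θ p with hm2
    have hcons : Consistent G.kval E [N₁.mval m₁', N₂.mval m₂'] := by
      refine ⟨θ, hsolve, ?_⟩
      intro d hd
      simp only [List.mem_cons, List.mem_singleton, List.not_mem_nil, or_false] at hd
      rcases hd with rfl | rfl
      · exact hagree1 m₁' hcm₁
      · exact hagree2 m₂' hcθ2
    have hr := (heq.A3 m₁' m₂' hcons).1 hm₁'
    exact ⟨m₂', hr, hcθ2⟩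
  · rintro ⟨m₂', hm₂', hcm₂⟩
    set m₁' : N₁.Marking := fun p => θ p with hm1
    have hcons : Consistent G.kval E [N₁.mval m₁', N₂.mval m₂'] := by
      refine ⟨θ, hsolve, ?_⟩
      intro d hd
      simp only [List.mem_cons, List.mem_singleton, List.not_mem_nil, or_false] at hd
      rcases hd with rfl | rfl
      · exact hagree1 m₁' hcθ1
      · exact hagree2 m₂' hcm₂
    have hr := (heq.A3 m₁' m₂' hcons).2 hm₂'
    exact ⟨m₁', hr, hcθ1⟩
end

section
/- (Dead node characterization) Let ⟦E⟧ be a well-formed TFG for (N₁, m₁) ▷_E (N₂, m₂), with both nets safe and every root of ⟦E⟧ either a constant node with value 0 or 1 or a place of N₂, and let 𝒞 be its concurrency relation. Suppose v is a node such that v ∘→ X or X →• v. Then ¬(v 𝒞 v) if and only if ¬(w 𝒞 w) for all nodes w ∈ X. -/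
/-- dead node characterization. -/
theorem dead_node_characterization {V : Type} (G : TFG V) (E : EqSystem V)
    (N₁ : PetriNet V) (m₁ : N₁.Marking) (N₂ : PetriNet V) (m₂ : N₂.Marking)
    (hwf : WellFormed G E N₁ N₂)
    (heq : EEquiv G.kval E N₁ m₁ N₂ m₂)
    (hs₁ : N₁.Safe m₁) (hs₂ : N₂.Safe m₂)
    (hroots : ∀ v, G.Root v →
      G.kval v = some 0 ∨ G.kval v = some 1 ∨ v ∈ N₂.places)
    (v : V) (X : Finset V) (hX : G.AggSet v X ∨ G.RedSet v X) :
    ¬ G.Conc N₂ m₂ v v ↔ ∀ w ∈ X, ¬ G.Conc N₂ m₂ w w := by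
  constructor
  · intro hdead w hw hcw
    apply hdead
    obtain ⟨c, hwd, htot, hr, ⟨n, hn, hnp⟩, _⟩ := hcw
    have hvmem : v ∈ G.nodes := by
      rcases hX with ⟨hne, hall⟩ | ⟨hne, hall⟩
      · obtain ⟨w0, hw0⟩ := hne; exact (G.Aarc_mem v w0 ((hall w0).1 hw0)).1
      · obtain ⟨w0, hw0⟩ := hne; exact (G.Rarc_mem w0 v ((hall w0).1 hw0)).2
    obtain ⟨m, hm⟩ := Option.isSome_iff_exists.mp (htot v hvmem)
    obtain ⟨g, hg, hsum⟩ := hwd.ceq v X hX m hm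
    have hgn : g w = n := by
      have h2 := hg w hw; rw [hn] at h2; exact (Option.some.injEq _ _ ▸ h2).symm
    have hpos : 0 < m := by
      rw [hsum]
      calc 0 < n := hnp
        _ = g w := hgn.symm
        _ ≤ _ := Finset.single_le_sum (fun _ _ => Nat.zero_le _) hw
    exact ⟨c, hwd, htot, hr, ⟨m, hm, hpos⟩, ⟨m, hm, hpos⟩⟩
  · intro hall hcv
    obtain ⟨c, hwd, htot, hr, ⟨n, hn, hnp⟩, _⟩ := hcv
    obtain ⟨g, hg, hsum⟩ := hwd.ceq v X hX n hn
    have hex : ∃ w ∈ X, 0 < g w := by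
      by_contra h; push_neg at h
      have : n = 0 := by
        rw [hsum]; exact Finset.sum_eq_zero (fun w hw => Nat.le_zero.mp (h w hw))
      omega
    obtain ⟨w, hw, hgw⟩ := hex
    exact hall w hw ⟨c, hwd, htot, hr, ⟨g w, hg w hw, hgw⟩, ⟨g w, hg w hw, hgw⟩⟩
end

section
/- (Heredity of nonconcurrency) Let ⟦E⟧ be a well-formed TFG for (N₁, m₁) ▷_E (N₂, m₂), with both nets safe and every root of ⟦E⟧ either a constant node with value 0 or 1 or a place of N₂, and let 𝒞 be its concurrency relation. Suppose v is a node such that v ∘→ X or X →• v, and v' is any node. Then ¬(v 𝒞 v') if and only if ¬(w 𝒞 v') for every node w ∈ X. -/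
/-- heredity of nonconcurrency. -/
theorem heredity_nonconcurrency {V : Type} (G : TFG V) (E : EqSystem V)
    (N₁ : PetriNet V) (m₁ : N₁.Marking) (N₂ : PetriNet V) (m₂ : N₂.Marking)
    (hwf : WellFormed G E N₁ N₂)
    (heq : EEquiv G.kval E N₁ m₁ N₂ m₂)
    (hs₁ : N₁.Safe m₁) (hs₂ : N₂.Safe m₂)
    (hroots : ∀ v, G.Root v →
      G.kval v = some 0 ∨ G.kval v = some 1 ∨ v ∈ N₂.places)
    (v : V) (X : Finset V) (hX : G.AggSet v X ∨ G.RedSet v X) (v' : V) :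
    ¬ G.Conc N₂ m₂ v v' ↔ ∀ w ∈ X, ¬ G.Conc N₂ m₂ w v' := by
  -- v is a node of G
  have hvmem : v ∈ G.nodes := by
    rcases hX with ⟨⟨w0, hw0⟩, hiff⟩ | ⟨⟨w0, hw0⟩, hiff⟩
    · exact (G.Aarc_mem v w0 ((hiff w0).1 hw0)).1
    · exact (G.Rarc_mem w0 v ((hiff w0).1 hw0)).2
  constructor
  · -- ¬ v 𝒞 v' → ∀ w ∈ X, ¬ w 𝒞 v'
    intro hnc w hw hc
    apply hnc
    obtain ⟨c, hwd, htot, hrr, ⟨n, hcw, hn⟩, hv'⟩ := hc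
    -- c v is defined
    obtain ⟨m, hcv⟩ := Option.isSome_iff_exists.1 (htot v hvmem)
    obtain ⟨g, hg, hsum⟩ := hwd.ceq v X hX m hcv
    have : g w = n := by
      have := hg w hw
      rw [hcw] at this; exact (Option.some_inj.1 this).symm
    have hm : 0 < m := by
      have hle : g w ≤ ∑ x ∈ X, g x :=
        Finset.single_le_sum (fun i _ => Nat.zero_le _) hw
      omega
    exact ⟨c, hwd, htot, hrr, ⟨m, hcv, hm⟩, hv'⟩
  · -- (∀ w ∈ X, ¬ w 𝒞 v') → ¬ v 𝒞 v'
    intro hall hc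
    obtain ⟨c, hwd, htot, hrr, ⟨n, hcv, hn⟩, hv'⟩ := hc
    obtain ⟨g, hg, hsum⟩ := hwd.ceq v X hX n hcv
    have : ∃ w ∈ X, 0 < g w := by
      by_contra h
      push_neg at h
      have : ∑ w ∈ X, g w = 0 := Finset.sum_eq_zero (fun w hw => Nat.le_zero.1 (h w hw))
      omega
    obtain ⟨w, hw, hgw⟩ := this
    exact hall w hw ⟨c, hwd, htot, hrr, ⟨g w, hg w hw, hgw⟩, hv'⟩
end
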